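/- arXiv:1409.3642 — 2 statements merged into one kernel-verified Lean document; each statement's English description precedes it below -/
import Mathlib

section
/- Let $\zeta_1,\dots,\zeta_n$ be independent non-negative random variables with $E\zeta_i^p < \infty$ for some $1 < p \le 2$. Then for any $0 < y < \sum_{i=1}^n E\zeta_i$, one has $P\big(\sum_{i=1}^n \zeta_i \le \sum_{i=1}^n E\zeta_i - y\big) \le \exp\Big(-\frac{p-1}{4}\cdot \frac{y^{p/(p-1)}}{(\sum_{i=1}^n E\zeta_i^p)^{1/(p-1)}}\Big)$. -/
/-!
Chernoff's method with the elementary bound `exp (-u) ≤ 1 - u + u ^ p` for `u ≥ 0` and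
`1 ≤ p ≤ 2`: for every `t ≥ 0`, `E exp (-t ζᵢ) ≤ exp (-t E ζᵢ + t ^ p E ζᵢ ^ p)`, so by
independence `P(∑ ζᵢ ≤ ∑ E ζᵢ - y) ≤ exp (-t y + t ^ p B)` with `B = ∑ E ζᵢ ^ p`. The exponent is
minimised at `t = (y / (p B)) ^ (1 / (p - 1))`, where it equals
`-(p - 1) / p ^ (p / (p - 1)) · y ^ (p / (p - 1)) / B ^ (1 / (p - 1))`, and `p ^ (p / (p - 1)) ≤ 4`
on `(1, 2]` by convexity of `x log x`.
-/

open MeasureTheory ProbabilityTheory Real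

namespace Real

lemma exp_neg_le_one_sub_add_sq {u : ℝ} (hu : 0 ≤ u) : exp (-u) ≤ 1 - u + u ^ 2 := by
  have hexp : exp (-u) * exp u = 1 := by rw [← exp_add, neg_add_cancel, exp_zero]
  nlinarith [add_one_le_exp u, exp_pos (-u), mul_nonneg (mul_nonneg hu hu) hu]

lemma exp_neg_le_one_sub_add_rpow {p u : ℝ} (hp1 : 1 ≤ p) (hp2 : p ≤ 2) (hu : 0 ≤ u) :
    exp (-u) ≤ 1 - u + u ^ p := by
  rcases le_or_gt u 1 with hu1 | hu1
  · have hsq : u ^ (2 : ℝ) ≤ u ^ p := rpow_le_rpow_of_exponent_ge' hu hu1 (by linarith) hp2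
    rw [rpow_two] at hsq
    linarith [exp_neg_le_one_sub_add_sq hu]
  · have hu_le : u ≤ u ^ p := by
      simpa using rpow_le_rpow_of_exponent_le hu1.le hp1
    linarith [exp_le_one_iff.2 (neg_nonpos.2 hu)]

lemma rpow_div_sub_one_le_four {p : ℝ} (hp1 : 1 < p) (hp2 : p ≤ 2) :
    p ^ (p / (p - 1)) ≤ 4 := by
  have hconv : p * log p ≤ (p - 1) * log 4 := by
    have h := convexOn_mul_log.2 (by norm_num : (1 : ℝ) ∈ Set.Ici 0)
      (by norm_num : (2 : ℝ) ∈ Set.Ici 0) (by linarith : 0 ≤ 2 - p) (by linarith : 0 ≤ p - 1)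
      (by ring)
    have h4 : log 4 = 2 * log 2 := by
      rw [show (4 : ℝ) = 2 ^ 2 by norm_num, log_pow]; norm_num
    simp only [smul_eq_mul, log_one, mul_zero, mul_one, zero_add] at h
    rw [show 2 - p + (p - 1) * 2 = p by ring] at h
    rwa [h4]
  rw [rpow_def_of_pos (by linarith), ← exp_log (by norm_num : (0 : ℝ) < 4), exp_le_exp,
    mul_div_assoc', div_le_iff₀ (by linarith)]
  linarith

lemma exists_neg_mul_add_rpow_mul_le {p a b : ℝ} (hp1 : 1 < p) (hp2 : p ≤ 2) (ha : 0 < a)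
    (hb : 0 < b) : ∃ t, 0 ≤ t ∧
      -(t * a) + t ^ p * b ≤ -((p - 1) / 4) * (a ^ (p / (p - 1)) / b ^ (1 / (p - 1))) := by
  have hp0 : 0 < p := by linarith
  have hq : 0 < p - 1 := by linarith
  set t := (a / (p * b)) ^ (1 / (p - 1)) with ht_def
  set K := a ^ (p / (p - 1)) / b ^ (1 / (p - 1)) with hK_def
  have ht0 : 0 < t := by positivity
  have htp : t ^ p * b = t * a / p := by
    have ht : t ^ (p - 1) = a / (p * b) := by
      rw [← rpow_mul (by positivity), one_div_mul_cancel hq.ne', rpow_one]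
    rw [show t ^ p = t ^ (p - 1) * t by rw [rpow_sub_one ht0.ne']; field_simp, ht]
    field_simp
  have hta : t * a = K / p ^ (1 / (p - 1)) := by
    have hsplit : p / (p - 1) = 1 / (p - 1) + 1 := by field_simp; ring
    rw [ht_def, hK_def, div_rpow ha.le (by positivity), mul_rpow hp0.le hb.le, hsplit,
      rpow_add ha, rpow_one]
    field_simp
  have hpow : p * p ^ (1 / (p - 1)) = p ^ (p / (p - 1)) := by
    rw [show p / (p - 1) = 1 + 1 / (p - 1) by field_simp; ring, rpow_add hp0, rpow_one]
  refine ⟨t, by positivity, ?_⟩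
  calc -(t * a) + t ^ p * b = -((p - 1) * K / p ^ (p / (p - 1))) := by
        rw [htp, hta, ← hpow]; field_simp; ring
    _ ≤ -((p - 1) * K / 4) := by
        gcongr
        exact rpow_div_sub_one_le_four hp1 hp2
    _ = -((p - 1) / 4) * K := by ring

end Real

namespace ProbabilityTheory

variable {Ω : Type*} [MeasurableSpace Ω] {μ : Measure Ω} [IsProbabilityMeasure μ] {p t : ℝ}

lemma mgf_neg_le_exp_of_nonneg {X : Ω → ℝ} (hp1 : 1 ≤ p) (hp2 : p ≤ 2) (ht : 0 ≤ t)
    (hX : 0 ≤ᵐ[μ] X) (hint : Integrable X μ) (hint_p : Integrable (fun ω => X ω ^ p) μ) :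
    mgf X μ (-t) ≤ exp (-(t * ∫ ω, X ω ∂μ) + t ^ p * ∫ ω, X ω ^ p ∂μ) := by
  have hint_poly : Integrable (fun ω => 1 - t * X ω + t ^ p * X ω ^ p) μ :=
    ((integrable_const 1).sub (hint.const_mul t)).add (hint_p.const_mul _)
  calc mgf X μ (-t) ≤ ∫ ω, (1 - t * X ω + t ^ p * X ω ^ p) ∂μ := by
        refine integral_mono_of_nonneg (ae_of_all _ fun ω => (exp_pos _).le) hint_poly ?_
        filter_upwards [hX] with ω hω
        simpa [neg_mul, mul_rpow ht hω] using
          exp_neg_le_one_sub_add_rpow hp1 hp2 (mul_nonneg ht hω)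
    _ = 1 - t * ∫ ω, X ω ∂μ + t ^ p * ∫ ω, X ω ^ p ∂μ := by
        rw [integral_add (f := fun ω => 1 - t * X ω) ((integrable_const 1).sub (hint.const_mul t))
          (hint_p.const_mul _), integral_sub (integrable_const 1) (hint.const_mul t),
          integral_const_mul, integral_const_mul]
        simp
    _ ≤ exp (-(t * ∫ ω, X ω ∂μ) + t ^ p * ∫ ω, X ω ^ p ∂μ) := by
        linarith [add_one_le_exp (-(t * ∫ ω, X ω ∂μ) + t ^ p * ∫ ω, X ω ^ p ∂μ)]

variable {ι : Type*} [Fintype ι] {ζ : ι → Ω → ℝ}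

lemma iIndepFun.mgf_sum_neg_le_exp (hindep : iIndepFun ζ μ) (hp1 : 1 ≤ p) (hp2 : p ≤ 2)
    (ht : 0 ≤ t) (hnonneg : ∀ i, 0 ≤ᵐ[μ] ζ i) (hint : ∀ i, Integrable (ζ i) μ)
    (hint_p : ∀ i, Integrable (fun ω => ζ i ω ^ p) μ) :
    mgf (∑ i, ζ i) μ (-t) ≤
      exp (-(t * ∑ i, ∫ ω, ζ i ω ∂μ) + t ^ p * ∑ i, ∫ ω, ζ i ω ^ p ∂μ) := by
  rw [hindep.mgf_sum₀ (fun i => (hint i).aemeasurable), Finset.mul_sum, Finset.mul_sum,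
    ← Finset.sum_neg_distrib, ← Finset.sum_add_distrib, exp_sum]
  exact Finset.prod_le_prod (fun i _ => mgf_nonneg)
    fun i _ => mgf_neg_le_exp_of_nonneg hp1 hp2 ht (hnonneg i) (hint i) (hint_p i)

lemma iIndepFun.measureReal_sum_le_sub_le_exp (hindep : iIndepFun ζ μ) (hp1 : 1 ≤ p)
    (hp2 : p ≤ 2) (ht : 0 ≤ t) (hnonneg : ∀ i, 0 ≤ᵐ[μ] ζ i) (hint : ∀ i, Integrable (ζ i) μ)
    (hint_p : ∀ i, Integrable (fun ω => ζ i ω ^ p) μ) (y : ℝ) :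
    μ.real {ω | ∑ i, ζ i ω ≤ (∑ i, ∫ ω', ζ i ω' ∂μ) - y} ≤
      exp (-(t * y) + t ^ p * ∑ i, ∫ ω, ζ i ω ^ p ∂μ) := by
  set A := ∑ i, ∫ ω, ζ i ω ∂μ
  have hsum_nonneg : 0 ≤ᵐ[μ] ∑ i, ζ i := by
    filter_upwards [ae_all_iff.2 hnonneg] with ω hω
    simpa only [Finset.sum_apply, Pi.zero_apply] using Finset.sum_nonneg fun i _ => hω i
  have hexp_int : Integrable (fun ω => exp (-t * (∑ i, ζ i) ω)) μ := by
    have hmeas : AEMeasurable (∑ i, ζ i) μ :=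
      Finset.aemeasurable_sum _ fun i _ => (hint i).aemeasurable
    refine (integrable_const 1).mono' (hmeas.const_mul _).exp.aestronglyMeasurable ?_
    filter_upwards [hsum_nonneg] with ω hω
    rw [norm_of_nonneg (exp_pos _).le, exp_le_one_iff]
    exact mul_nonpos_of_nonpos_of_nonneg (neg_nonpos.2 ht) hω
  have hchernoff := measure_le_le_exp_mul_mgf (A - y) (neg_nonpos.2 ht) hexp_int
  simp only [Finset.sum_apply, neg_neg] at hchernoff
  calc _ ≤ exp (t * (A - y)) * mgf (∑ i, ζ i) μ (-t) := hchernoff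
    _ ≤ exp (t * (A - y)) * exp (-(t * A) + t ^ p * ∑ i, ∫ ω, ζ i ω ^ p ∂μ) := by
        gcongr
        exact hindep.mgf_sum_neg_le_exp hp1 hp2 ht hnonneg hint hint_p
    _ = exp (-(t * y) + t ^ p * ∑ i, ∫ ω, ζ i ω ^ p ∂μ) := by
        rw [← exp_add]; ring_nf

end ProbabilityTheory

lemma MeasureTheory.MemLp.integrable_rpow_of_nonneg {Ω : Type*} [MeasurableSpace Ω]
    {μ : Measure Ω} [IsFiniteMeasure μ] {X : Ω → ℝ} {p : ℝ} (hp : 0 ≤ p) (hX : 0 ≤ᵐ[μ] X)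
    (hmem : MemLp X (ENNReal.ofReal p) μ) : Integrable (fun ω => X ω ^ p) μ := by
  refine hmem.integrable_norm_rpow'.congr ?_
  filter_upwards [hX] with ω hω
  rw [ENNReal.toReal_ofReal hp, norm_of_nonneg hω]

theorem lower_tail_independent_nonneg_general
    {Ω : Type*} [MeasurableSpace Ω] (μ : Measure Ω) [IsProbabilityMeasure μ]
    (n : ℕ) (ζ : Fin n → Ω → ℝ) (p : ℝ) (hp1 : 1 < p) (hp2 : p ≤ 2)
    (hindep : iIndepFun ζ μ)
    (hnonneg : ∀ i, 0 ≤ᵐ[μ] ζ i)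
    (hmom : ∀ i, MemLp (ζ i) (ENNReal.ofReal p) μ)
    (y : ℝ) (hy0 : 0 < y) :
    (μ {ω | ∑ i, ζ i ω ≤ (∑ i, ∫ ω', ζ i ω' ∂μ) - y}).toReal ≤
      Real.exp (-((p - 1) / 4) *
        (y ^ (p / (p - 1)) / (∑ i, ∫ ω, ζ i ω ^ p ∂μ) ^ (1 / (p - 1)))) := by
  have hint i : Integrable (ζ i) μ := (hmom i).integrable (by simpa using hp1.le)
  have hint_p i := (hmom i).integrable_rpow_of_nonneg (by linarith) (hnonneg i)
  have hB : 0 ≤ ∑ i, ∫ ω, ζ i ω ^ p ∂μ := Finset.sum_nonneg fun i _ =>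
    integral_nonneg_of_ae <| (hnonneg i).mono fun ω hω => rpow_nonneg hω p
  rcases hB.eq_or_lt with hB0 | hBpos
  · -- For `B = 0` the right-hand side is `exp 0 = 1`: `0 ^ (1 / (p - 1)) = 0` and `x / 0 = 0`.
    rw [← hB0, zero_rpow (one_div_ne_zero (by linarith)), div_zero, mul_zero, exp_zero]
    exact measureReal_le_one
  obtain ⟨t, ht, hexponent⟩ := exists_neg_mul_add_rpow_mul_le hp1 hp2 hy0 hBpos
  exact (hindep.measureReal_sum_le_sub_le_exp hp1.le hp2 ht hnonneg hint hint_p y).trans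
    (exp_le_exp.2 hexponent)

/-- Lower-tail inequality for sums of independent non-negative random variables:
if `ζ₁,…,ζₙ` are independent, non-negative, with finite `p`-th moments for some
`1 < p ≤ 2`, then for any `0 < y < ∑ E ζᵢ`,
`P(∑ ζᵢ ≤ ∑ E ζᵢ - y) ≤ exp(-((p-1)/4) · y^{p/(p-1)} / (∑ E ζᵢ^p)^{1/(p-1)})`. -/
theorem lower_tail_independent_nonneg
    {Ω : Type*} [MeasurableSpace Ω] (μ : Measure Ω) [IsProbabilityMeasure μ]
    (n : ℕ) (ζ : Fin n → Ω → ℝ) (p : ℝ) (hp1 : 1 < p) (hp2 : p ≤ 2)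
    (hmeas : ∀ i, Measurable (ζ i))
    (hindep : iIndepFun ζ μ)
    (hnonneg : ∀ i, 0 ≤ᵐ[μ] ζ i)
    (hmom : ∀ i, MemLp (ζ i) (ENNReal.ofReal p) μ)
    (y : ℝ) (hy0 : 0 < y) (hy : y < ∑ i, ∫ ω, ζ i ω ∂μ) :
    (μ {ω | ∑ i, ζ i ω ≤ (∑ i, ∫ ω', ζ i ω' ∂μ) - y}).toReal ≤
      Real.exp (-((p - 1) / 4) *
        (y ^ (p / (p - 1)) / (∑ i, ∫ ω, ζ i ω ^ p ∂μ) ^ (1 / (p - 1)))) :=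
  lower_tail_independent_nonneg_general μ n ζ p hp1 hp2 hindep hnonneg hmom y hy0
end

section
/- Let $\Phi$ denote the standard normal distribution function. Then $\max_{0 \le x \le n} \Big| \frac{1-\Phi(x)}{1-\Phi(x + n^{-2})} - 1 \Big| = O(n^{-1})$ as $n \to \infty$; that is, there exist constants $C$ and $N$ such that for all $n \ge N$ and all $x \in [0,n]$, $\big| \frac{1-\Phi(x)}{1-\Phi(x+n^{-2})} - 1 \big| \le C/n$. -/
open MeasureTheory ProbabilityTheory

/-- The standard normal cumulative distribution function. -/
noncomputable def stdNormalCDF (x : ℝ) : ℝ :=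
  ((gaussianReal 0 1) (Set.Iic x)).toReal

/-! With `φ` the standard normal density, `(1 - Φ x) / (1 - Φ (x + ε)) - 1` is
`(Φ (x + ε) - Φ x) / (1 - Φ (x + ε))`. For `x ≥ 0` the numerator is at most `ε φ x`, since `φ`
decreases on `[0, ∞)`, and the denominator is at least `δ φ (x + ε + δ)` for every `δ > 0`. The
ratio `φ x / φ (x + ε + δ) = exp (((x + ε + δ)² - x²) / 2)` stays bounded for `x ≤ n`
once `ε = n⁻²` and `δ = n⁻¹`, which leaves the factor `ε / δ = n⁻¹`. -/

open Real Set

lemma gaussianPDFReal_eq_exp_mul (μ : ℝ) (v : NNReal) (a b : ℝ) :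
    gaussianPDFReal μ v a
      = exp (((b - μ) ^ 2 - (a - μ) ^ 2) / (2 * v)) * gaussianPDFReal μ v b := by
  simp only [gaussianPDFReal]
  rw [mul_left_comm, ← exp_add]
  ring_nf

lemma gaussianPDFReal_antitoneOn (μ : ℝ) (v : NNReal) :
    AntitoneOn (gaussianPDFReal μ v) (Ici μ) := by
  intro a ha b _ hab
  simp only [gaussianPDFReal]
  gcongr
  exact sub_nonneg.mpr ha

lemma stdNormalCDF_le_one (x : ℝ) : stdNormalCDF x ≤ 1 := measureReal_le_one

lemma stdNormalCDF_sub_stdNormalCDF (a b : ℝ) :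
    stdNormalCDF b - stdNormalCDF a = ∫ t in a..b, gaussianPDFReal 0 1 t := by
  have hΦ (z : ℝ) : stdNormalCDF z = ∫ t in Iic z, gaussianPDFReal 0 1 t := by
    rw [stdNormalCDF, gaussianReal_apply_eq_integral 0 one_ne_zero,
      ENNReal.toReal_ofReal (setIntegral_nonneg measurableSet_Iic
        fun t _ => gaussianPDFReal_nonneg 0 1 t)]
  rw [hΦ, hΦ, intervalIntegral.integral_Iic_sub_Iic (integrable_gaussianPDFReal 0 1).integrableOn
    (integrable_gaussianPDFReal 0 1).integrableOn]

lemma stdNormalCDF_monotone : Monotone stdNormalCDF := fun a b hab => by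
  rw [← sub_nonneg, stdNormalCDF_sub_stdNormalCDF]
  exact intervalIntegral.integral_nonneg hab fun t _ => gaussianPDFReal_nonneg 0 1 t

lemma stdNormalCDF_sub_le {x y : ℝ} (hx : 0 ≤ x) (hxy : x ≤ y) :
    stdNormalCDF y - stdNormalCDF x ≤ (y - x) * gaussianPDFReal 0 1 x := by
  rw [stdNormalCDF_sub_stdNormalCDF, ← smul_eq_mul, ← intervalIntegral.integral_const]
  exact intervalIntegral.integral_mono_on hxy
    ((integrable_gaussianPDFReal 0 1).intervalIntegrable) intervalIntegrable_const
    fun t ht => gaussianPDFReal_antitoneOn 0 1 hx (hx.trans ht.1) ht.1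

lemma mul_gaussianPDFReal_le_one_sub_stdNormalCDF {y δ : ℝ} (hy : 0 ≤ y) (hδ : 0 ≤ δ) :
    δ * gaussianPDFReal 0 1 (y + δ) ≤ 1 - stdNormalCDF y := by
  have hyδ : y ≤ y + δ := le_add_of_nonneg_right hδ
  calc δ * gaussianPDFReal 0 1 (y + δ) = ∫ _ in y..y + δ, gaussianPDFReal 0 1 (y + δ) := by
        rw [intervalIntegral.integral_const, smul_eq_mul, add_sub_cancel_left]
    _ ≤ ∫ t in y..y + δ, gaussianPDFReal 0 1 t :=
        intervalIntegral.integral_mono_on hyδ intervalIntegrable_const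
          ((integrable_gaussianPDFReal 0 1).intervalIntegrable)
          fun t ht => gaussianPDFReal_antitoneOn 0 1 (hy.trans ht.1) (hy.trans hyδ) ht.2
    _ = stdNormalCDF (y + δ) - stdNormalCDF y := (stdNormalCDF_sub_stdNormalCDF _ _).symm
    _ ≤ 1 - stdNormalCDF y := by linarith [stdNormalCDF_le_one (y + δ)]

lemma abs_one_sub_stdNormalCDF_div_sub_one_le {x ε δ : ℝ} (hx : 0 ≤ x) (hε : 0 ≤ ε)
    (hδ : 0 < δ) :
    |(1 - stdNormalCDF x) / (1 - stdNormalCDF (x + ε)) - 1|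
      ≤ ε / δ * exp (((x + ε + δ) ^ 2 - x ^ 2) / 2) := by
  set y := x + ε
  have hxy : x ≤ y := le_add_of_nonneg_right hε
  have hφ : 0 < gaussianPDFReal 0 1 (y + δ) := gaussianPDFReal_pos 0 1 _ one_ne_zero
  have htail : δ * gaussianPDFReal 0 1 (y + δ) ≤ 1 - stdNormalCDF y :=
    mul_gaussianPDFReal_le_one_sub_stdNormalCDF (hx.trans hxy) hδ.le
  have htail_pos : 0 < 1 - stdNormalCDF y := (mul_pos hδ hφ).trans_le htail
  have hnum : stdNormalCDF y - stdNormalCDF x ≤ ε * gaussianPDFReal 0 1 x := by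
    simpa only [y, add_sub_cancel_left] using stdNormalCDF_sub_le hx hxy
  have hratio : (1 - stdNormalCDF x) / (1 - stdNormalCDF y) - 1
      = (stdNormalCDF y - stdNormalCDF x) / (1 - stdNormalCDF y) := by
    field_simp
    ring
  rw [hratio, abs_of_nonneg (div_nonneg (sub_nonneg.mpr (stdNormalCDF_monotone hxy))
    htail_pos.le)]
  calc (stdNormalCDF y - stdNormalCDF x) / (1 - stdNormalCDF y)
      ≤ ε * gaussianPDFReal 0 1 x / (δ * gaussianPDFReal 0 1 (y + δ)) :=
        div_le_div₀ (mul_nonneg hε (gaussianPDFReal_nonneg 0 1 x)) hnum (mul_pos hδ hφ) htail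
    _ = ε / δ * exp (((x + ε + δ) ^ 2 - x ^ 2) / 2) := by
        rw [gaussianPDFReal_eq_exp_mul 0 1 x (y + δ)]
        field_simp
        simp [y]

/-- Stability of Gaussian tails under perturbation `+n⁻²`:
`max_{0 ≤ x ≤ n} |(1-Φ(x))/(1-Φ(x+n⁻²)) - 1| = O(n⁻¹)`. -/
theorem gaussian_tail_stability_plus :
    ∃ (C : ℝ) (N : ℕ), ∀ n : ℕ, N ≤ n → ∀ x : ℝ, 0 ≤ x → x ≤ n →
      |(1 - stdNormalCDF x) / (1 - stdNormalCDF (x + ((n : ℝ) ^ 2)⁻¹)) - 1| ≤ C / n := by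
  refine ⟨exp 4, 1, fun n hn x hx hxn => ?_⟩
  have hn1 : (1 : ℝ) ≤ n := by exact_mod_cast hn
  have hn0 : (0 : ℝ) < n := one_pos.trans_le hn1
  set δ : ℝ := (n : ℝ)⁻¹
  have hδ : 0 < δ := inv_pos.mpr hn0
  have hδ1 : δ ≤ 1 := inv_le_one_of_one_le₀ hn1
  have hxδ : x * δ ≤ 1 := by
    rw [← div_eq_mul_inv, div_le_one hn0]
    exact hxn
  have hε : ((n : ℝ) ^ 2)⁻¹ = δ * δ := by rw [sq, mul_inv]
  refine (abs_one_sub_stdNormalCDF_div_sub_one_le hx (by positivity) hδ).trans ?_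
  rw [hε, mul_div_cancel_right₀ δ hδ.ne', div_eq_inv_mul (exp 4)]
  have hs : δ * δ + δ ≤ 2 := by nlinarith
  have hxs : x * (δ * δ + δ) ≤ 2 := by nlinarith
  gcongr
  nlinarith
end
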